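/- arXiv:2010.03463 — 6 statements merged into one kernel-verified Lean document; each statement's English description precedes it below -/
import Mathlib

section
/- Let R be a ring with a non-zero-divisor π such that R is π-adically complete and separated, p ∈ π^p R, and the Frobenius map R/π → R/π^p (x ↦ x^p) is an isomorphism. Then for any f ∈ R, the π-adic completion R⟨f⁻¹⟩ := lim_n (R/π^n)[f⁻¹] is again a ring in which π is a non-zero divisor, the ring is π-adically complete and separated, and the Frobenius map R⟨f⁻¹⟩/π → R⟨f⁻¹⟩/π^p is an isomorphism. -/
/-!
Localization and adic completion both preserve the two Frobenius conditions. In `M⁻¹R`,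
`a / m = a m ^ (p - 1) / m ^ p`, so a `p`-th root of `a m ^ (p - 1)` modulo `I ^ p` yields one
of `a / m`; and `(a / m) ^ p ∈ I ^ p M⁻¹R` means `t a ^ p ∈ I ^ p` for some `t ∈ M`, so that
`(t a) ^ p ∈ I ^ p` and `t a ∈ I`. For the completion `Ŝ` of `S` along a finitely generated
ideal `I`, the kernel of `Ŝ → S ⧸ I ^ n` is `(I Ŝ) ^ n`, so statements about `Ŝ` modulo powers
of `I Ŝ` reduce to statements about `S` modulo powers of `I`. This transfers the Frobenius
conditions, and, for `I = (g)` with `g` regular, the regularity of `g`; that `Ŝ` is `I Ŝ`-adically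
complete holds for every finitely generated `I`.
-/

namespace Ideal

variable {R : Type*} [CommRing R]

/- When `p ∈ I ^ p`, `x ↦ x ^ p` induces a ring map `R ⧸ I → R ⧸ I ^ p`, and these two
conditions say that it is surjective, resp. injective. -/
def FrobeniusSurjective (I : Ideal R) (p : ℕ) : Prop :=
  ∀ y : R, ∃ x : R, y - x ^ p ∈ I ^ p

def FrobeniusInjective (I : Ideal R) (p : ℕ) : Prop :=
  ∀ x : R, x ^ p ∈ I ^ p → x ∈ I

theorem mem_span_singleton_pow_of_mul_mem {g s : R} (hg : g ∈ nonZeroDivisors R) {n : ℕ}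
    (h : g * s ∈ span {g} ^ (n + 1)) : s ∈ span {g} ^ n := by
  obtain ⟨z, hz, hzs⟩ := mem_span_singleton_mul.mp (pow_succ' (span {g}) n ▸ h)
  rwa [← (mul_cancel_left_mem_nonZeroDivisors hg).mp hzs]

end Ideal

namespace IsLocalization

variable {R : Type*} [CommRing R] {S : Type*} [CommRing S] [Algebra R S] {I : Ideal R} {p : ℕ}

theorem frobeniusSurjective_map (M : Submonoid R) [IsLocalization M S]
    (h : I.FrobeniusSurjective p) : (I.map (algebraMap R S)).FrobeniusSurjective p := by
  intro y
  cases p with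
  | zero => exact ⟨0, by simp⟩
  | succ k =>
    obtain ⟨a, m, rfl⟩ := exists_mk'_eq M y
    obtain ⟨b, hb⟩ := h (a * m ^ k)
    set u := mk' S (1 : R) m
    have hmu : algebraMap R S m * u = 1 := by simp [u]
    refine ⟨algebraMap R S b * u, ?_⟩
    have hsub : algebraMap R S (a * m ^ k - b ^ (k + 1)) * u ^ (k + 1) =
        algebraMap R S a * (algebraMap R S m * u) ^ k * u - (algebraMap R S b * u) ^ (k + 1) := by
      simp only [map_sub, map_mul, map_pow]; ring
    rw [hmu, one_pow, mul_one] at hsub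
    rw [mk'_eq_mul_mk'_one, ← hsub, ← Ideal.map_pow]
    exact Ideal.mul_mem_right _ _ (Ideal.mem_map_of_mem _ hb)

theorem frobeniusInjective_map (M : Submonoid R) [IsLocalization M S] (hp : p ≠ 0)
    (h : I.FrobeniusInjective p) : (I.map (algebraMap R S)).FrobeniusInjective p := by
  intro y hy
  obtain ⟨a, m, rfl⟩ := exists_mk'_eq M y
  rw [← Ideal.map_pow, ← mk'_pow, mk'_mem_map_algebraMap_iff] at hy
  obtain ⟨t, ht, hta⟩ := hy
  obtain ⟨k, rfl⟩ := Nat.exists_eq_add_one_of_ne_zero hp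
  refine (mk'_mem_map_algebraMap_iff M S I a m).mpr ⟨t, ht, h _ ?_⟩
  rw [show (t * a) ^ (k + 1) = t ^ k * (t * a ^ (k + 1)) by ring]
  exact Ideal.mul_mem_left _ _ hta

end IsLocalization

namespace AdicCompletion

variable {R : Type*} [CommRing R] {I : Ideal R}

theorem evalₐ_eq_zero_iff (hI : I.FG) {n : ℕ} {x : AdicCompletion I R} :
    evalₐ I n x = 0 ↔ x ∈ I.map (algebraMap R (AdicCompletion I R)) ^ n := by
  rw [← Ideal.map_pow, ← Submodule.restrictScalars_mem R, ← Ideal.smul_top_eq_map,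
    pow_smul_top_eq_ker_eval hI, LinearMap.mem_ker]
  have hpow : I ^ n • ⊤ = I ^ n := by simp
  have : Function.Injective (Ideal.Quotient.factor hpow.le) := by
    simpa [RingHom.injective_iff_ker_eq_bot, Ideal.Quotient.factor_ker]
      using Ideal.map_mk_eq_bot_of_le hpow.ge
  simpa [← factor_eval_eq_evalₐ] using map_eq_zero_iff _ this

theorem evalₐ_eq_mk_iff (hI : I.FG) {n : ℕ} {x : AdicCompletion I R} {s : R} :
    evalₐ I n x = Ideal.Quotient.mk _ s ↔
      x - algebraMap R _ s ∈ I.map (algebraMap R (AdicCompletion I R)) ^ n := by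
  rw [← evalₐ_eq_zero_iff hI, map_sub, AlgHom.commutes, Ideal.Quotient.algebraMap_eq, sub_eq_zero]

theorem algebraMap_mem_nonZeroDivisors {g : R} (hg : g ∈ nonZeroDivisors R) :
    algebraMap R (AdicCompletion (Ideal.span {g}) R) g ∈
      nonZeroDivisors (AdicCompletion (Ideal.span {g}) R) := by
  have hI : (Ideal.span {g}).FG := Submodule.fg_span_singleton g
  refine mem_nonZeroDivisors_iff_right.mpr fun x hx => ext_evalₐ fun n => ?_
  rw [_root_.map_zero, evalₐ_eq_zero_iff hI]
  obtain ⟨s, hs⟩ := Ideal.Quotient.mk_surjective (evalₐ _ (n + 1) x)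
  have hgs : g * s ∈ Ideal.span {g} ^ (n + 1) := by
    rw [← Ideal.Quotient.eq_zero_iff_mem, map_mul, hs, ← Ideal.Quotient.algebraMap_eq,
      ← AlgHom.commutes (evalₐ _ (n + 1)), ← map_mul, mul_comm, hx, _root_.map_zero]
  rw [← sub_add_cancel x (algebraMap R _ s)]
  refine add_mem (Ideal.pow_le_pow_right n.le_succ ((evalₐ_eq_mk_iff hI).mp hs.symm)) ?_
  rw [← Ideal.map_pow]
  exact Ideal.mem_map_of_mem _ (Ideal.mem_span_singleton_pow_of_mul_mem hg hgs)

variable {p : ℕ}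

theorem frobeniusSurjective_map (hI : I.FG) (h : I.FrobeniusSurjective p) :
    (I.map (algebraMap R (AdicCompletion I R))).FrobeniusSurjective p := by
  intro y
  obtain ⟨u, hu⟩ := Ideal.Quotient.mk_surjective (evalₐ I p y)
  obtain ⟨s, hs⟩ := h u
  refine ⟨algebraMap R _ s, ?_⟩
  rw [← evalₐ_eq_zero_iff hI, map_sub, map_pow, AlgHom.commutes, ← hu,
    Ideal.Quotient.algebraMap_eq, ← map_pow, ← map_sub, Ideal.Quotient.eq_zero_iff_mem]
  exact hs

theorem frobeniusInjective_map (hI : I.FG) (hp : p ≠ 0) (h : I.FrobeniusInjective p) :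
    (I.map (algebraMap R (AdicCompletion I R))).FrobeniusInjective p := by
  intro x hx
  obtain ⟨s, hs⟩ := Ideal.Quotient.mk_surjective (evalₐ I p x)
  have hsp : s ^ p ∈ I ^ p := by
    rw [← Ideal.Quotient.eq_zero_iff_mem, map_pow, hs, ← map_pow, evalₐ_eq_zero_iff hI]
    exact hx
  rw [← sub_add_cancel x (algebraMap R _ s)]
  exact add_mem (Ideal.pow_le_self hp ((evalₐ_eq_mk_iff hI).mp hs.symm))
    (Ideal.mem_map_of_mem _ (h s hsp))

end AdicCompletion

theorem integral_perfectoid_completed_localization_general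
    (p : ℕ) (hp : p.Prime)
    (R : Type) [CommRing R] (π : R)
    (hπ : π ∈ nonZeroDivisors R)
    (hFrobSurj : ∀ y : R, ∃ x : R, y - x ^ p ∈ Ideal.span {π ^ p})
    (hFrobInj : ∀ x : R, x ^ p ∈ Ideal.span {π ^ p} → x ∈ Ideal.span {π})
    (f : R) :
    -- the completed localization `R⟨f⁻¹⟩ = lim_n (R/π^n)[f⁻¹]`
    let S := Localization.Away f
    let π' : S := algebraMap R S π
    let C := AdicCompletion (Ideal.span {π'}) S
    let π'' : C := algebraMap S C π'
    -- π is a non-zero divisor in `R⟨f⁻¹⟩`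
    π'' ∈ nonZeroDivisors C ∧
    -- `R⟨f⁻¹⟩` is π-adically complete and separated
    IsAdicComplete (Ideal.span {π''}) C ∧
    -- Frobenius `R⟨f⁻¹⟩/π → R⟨f⁻¹⟩/π^p` is surjective …
    (∀ y : C, ∃ x : C, y - x ^ p ∈ Ideal.span {π'' ^ p}) ∧
    -- … and injective
    (∀ x : C, x ^ p ∈ Ideal.span {π'' ^ p} → x ∈ Ideal.span {π''}) := by
  intro S π' C π''
  have hI : (Ideal.span {π'}).FG := Submodule.fg_span_singleton π'
  have hmapR : (Ideal.span {π}).map (algebraMap R S) = Ideal.span {π'} := by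
    rw [Ideal.map_span, Set.image_singleton]
  have hmapS : (Ideal.span {π'}).map (algebraMap S C) = Ideal.span {π''} := by
    rw [Ideal.map_span, Set.image_singleton]
  have hsurj : (Ideal.span {π'}).FrobeniusSurjective p := hmapR ▸
    IsLocalization.frobeniusSurjective_map (Submonoid.powers f)
      (by simpa only [Ideal.FrobeniusSurjective, Ideal.span_singleton_pow] using hFrobSurj)
  have hinj : (Ideal.span {π'}).FrobeniusInjective p := hmapR ▸
    IsLocalization.frobeniusInjective_map (Submonoid.powers f) hp.ne_zero
      (by simpa only [Ideal.FrobeniusInjective, Ideal.span_singleton_pow] using hFrobInj)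
  refine ⟨AdicCompletion.algebraMap_mem_nonZeroDivisors
      (IsLocalization.nonZeroDivisors_le_comap (Submonoid.powers f) S hπ), ?_, ?_, ?_⟩
  · exact hmapS ▸ AdicCompletion.isAdicComplete_self _ hI
  · have hsurjC : (Ideal.span {π''}).FrobeniusSurjective p :=
      hmapS ▸ AdicCompletion.frobeniusSurjective_map hI hsurj
    simpa only [Ideal.FrobeniusSurjective, Ideal.span_singleton_pow] using hsurjC
  · have hinjC : (Ideal.span {π''}).FrobeniusInjective p :=
      hmapS ▸ AdicCompletion.frobeniusInjective_map hI hp.ne_zero hinj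
    simpa only [Ideal.FrobeniusInjective, Ideal.span_singleton_pow] using hinjC

theorem integral_perfectoid_completed_localization
    (p : ℕ) (hp : p.Prime)
    (R : Type) [CommRing R] (π : R)
    (hπ : π ∈ nonZeroDivisors R)
    (hcomplete : IsAdicComplete (Ideal.span {π}) R)
    (hpdiv : (p : R) ∈ Ideal.span {π ^ p})
    (hFrobSurj : ∀ y : R, ∃ x : R, y - x ^ p ∈ Ideal.span {π ^ p})
    (hFrobInj : ∀ x : R, x ^ p ∈ Ideal.span {π ^ p} → x ∈ Ideal.span {π})
    (f : R) :
    -- the completed localization `R⟨f⁻¹⟩ = lim_n (R/π^n)[f⁻¹]`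
    let S := Localization.Away f
    let π' : S := algebraMap R S π
    let C := AdicCompletion (Ideal.span {π'}) S
    let π'' : C := algebraMap S C π'
    -- π is a non-zero divisor in `R⟨f⁻¹⟩`
    π'' ∈ nonZeroDivisors C ∧
    -- `R⟨f⁻¹⟩` is π-adically complete and separated
    IsAdicComplete (Ideal.span {π''}) C ∧
    -- Frobenius `R⟨f⁻¹⟩/π → R⟨f⁻¹⟩/π^p` is surjective …
    (∀ y : C, ∃ x : C, y - x ^ p ∈ Ideal.span {π'' ^ p}) ∧
    -- … and injective
    (∀ x : C, x ^ p ∈ Ideal.span {π'' ^ p} → x ∈ Ideal.span {π''}) :=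
  integral_perfectoid_completed_localization_general p hp R π hπ hFrobSurj hFrobInj f
end

section
/- Let R be a ring, π ∈ R a non-zero divisor, and f ∈ R. For all n, k ≥ 0 there is a short exact sequence 0 → R/π^n → R/π^{n+k} → R/π^k → 0 where the first map is multiplication by π^k; localizing at f and taking inverse limits over n yields a short exact sequence 0 → R⟨f⁻¹⟩ → R⟨f⁻¹⟩ → (R/π^k)[f⁻¹] → 0, where R⟨f⁻¹⟩ = lim_n (R/π^n)[f⁻¹] and the first map is multiplication by π^k. In particular π is a non-zero divisor in R⟨f⁻¹⟩ and R⟨f⁻¹⟩ is π-adically complete. -/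
/-!
Localization at `f` keeps `π` regular in `S = R[f⁻¹]`. Regularity then passes to the `π`-adic
completion level by level: if `π • x = 0`, each component `x (n + 1)` is divisible by `π ^ n`, so
`x n = 0`. Since `(π)` is finitely generated, the completion is `π`-adically complete and the
kernel of its projection to `S / π ^ k` is `π ^ k` times the completion (Stacks 05GG); and
`S / π ^ k S` is the localization of `R / π ^ k` at `f`.
-/

section FiniteLevel

variable {A : Type*} [CommRing A] {a : A}

theorem mem_span_pow_of_pow_mul_mem_span_pow_add (ha : a ∈ nonZeroDivisors A) {n k : ℕ} {x : A}
    (h : a ^ k * x ∈ Ideal.span {a ^ (n + k)}) : x ∈ Ideal.span {a ^ n} := by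
  obtain ⟨c, hc⟩ := Ideal.mem_span_singleton'.mp h
  refine Ideal.mem_span_singleton'.mpr ⟨c, ?_⟩
  rw [← mul_cancel_right_mem_nonZeroDivisors (pow_mem ha k)]
  linear_combination (pow_add a n k ▸ hc : c * (a ^ n * a ^ k) = a ^ k * x)

theorem mem_span_pow_iff_exists_sub_pow_mul_mem (n k : ℕ) (x : A) :
    x ∈ Ideal.span {a ^ k} ↔ ∃ y, x - a ^ k * y ∈ Ideal.span {a ^ (n + k)} := by
  simp only [Ideal.mem_span_singleton']
  constructor
  · rintro ⟨y, rfl⟩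
    exact ⟨y, 0, by ring⟩
  · rintro ⟨y, c, hc⟩
    refine ⟨y + c * a ^ n, ?_⟩
    linear_combination (pow_add a n k ▸ hc : c * (a ^ n * a ^ k) = _)

end FiniteLevel

namespace AdicCompletion

variable {A M : Type*} [CommRing A] [AddCommGroup M] [Module A M]

theorem mem_span_singleton_pow_smul_top_iff {a : A} {n : ℕ} {m : M} :
    m ∈ Ideal.span {a} ^ n • (⊤ : Submodule A M) ↔ ∃ m', a ^ n • m' = m := by
  simp [Ideal.span_singleton_pow, Submodule.ideal_span_singleton_smul,
    Submodule.mem_smul_pointwise_iff_exists]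

theorem isSMulRegular {a : A} (ha : IsSMulRegular M a) :
    IsSMulRegular (AdicCompletion (Ideal.span {a}) M) a := by
  refine isSMulRegular_iff_right_eq_zero_of_smul.mpr fun x hx => ext fun n => ?_
  obtain ⟨m, hm⟩ := Submodule.Quotient.mk_surjective _ (x.val (n + 1))
  have hsmul : a • m ∈ Ideal.span {a} ^ (n + 1) • (⊤ : Submodule A M) := by
    rw [← Submodule.Quotient.mk_eq_zero, Submodule.Quotient.mk_smul, hm, ← val_smul_apply, hx,
      val_zero_apply]
  obtain ⟨m', hm'⟩ := mem_span_singleton_pow_smul_top_iff.mp hsmul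
  have hdiv : m = a ^ n • m' :=
    ha (show a • m = a • (a ^ n • m') by rw [← hm', pow_succ', mul_smul])
  rw [val_zero_apply, ← x.property (Nat.le_succ n), ← hm, hdiv]
  exact (Submodule.Quotient.mk_eq_zero _).mpr
    (mem_span_singleton_pow_smul_top_iff.mpr ⟨m', rfl⟩)

theorem ker_evalₐ_eq_map {R : Type*} [CommRing R] {I : Ideal R} (hI : I.FG) (n : ℕ) :
    RingHom.ker (evalₐ I n).toRingHom = (I ^ n).map (algebraMap R (AdicCompletion I R)) := by
  have hsmul : (I ^ n • ⊤ : Ideal R) = I ^ n := by rw [smul_eq_mul, Ideal.mul_top]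
  have heval (x : AdicCompletion I R) : evalₐ I n x = 0 ↔ eval I R n x = 0 :=
    ⟨fun h => by rw [← factor_evalₐ_eq_eval (h := hsmul.ge), h, _root_.map_zero],
      fun h => by rw [← factor_eval_eq_evalₐ (h := hsmul.le), h, _root_.map_zero]⟩
  ext x
  rw [RingHom.mem_ker, AlgHom.toRingHom_eq_coe, RingHom.coe_coe, heval, ← LinearMap.mem_ker,
    ← pow_smul_top_eq_ker_eval hI, Ideal.smul_top_eq_map, Submodule.restrictScalars_mem]

end AdicCompletion

theorem IsLocalization.Away.quotient_ideal_map {R S : Type*} [CommRing R] [CommRing S]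
    [Algebra R S] (f : R) [IsLocalization.Away f S] (J : Ideal R) :
    IsLocalization.Away (Ideal.Quotient.mk J f) (S ⧸ J.map (algebraMap R S)) := by
  rw [IsLocalization.Away, ← Ideal.Quotient.algebraMap_eq, ← Submonoid.map_powers]
  exact inferInstanceAs (IsLocalization (Algebra.algebraMapSubmonoid _ (Submonoid.powers f)) _)

open AdicCompletion in
theorem exists_surjective_adicCompletion_to_localization_quotient {R S : Type*} [CommRing R]
    [CommRing S] [Algebra R S] (f π : R) [IsLocalization.Away f S] (k : ℕ) :
    ∃ g : AdicCompletion (Ideal.span {algebraMap R S π}) S →+*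
        Localization.Away (Ideal.Quotient.mk (Ideal.span {π ^ k}) f),
      Function.Surjective g ∧
      RingHom.ker g = Ideal.span {algebraMap S (AdicCompletion _ S) (algebraMap R S π) ^ k} ∧
      ∀ r : R, g (algebraMap S (AdicCompletion _ S) (algebraMap R S r)) =
        algebraMap (R ⧸ Ideal.span {π ^ k}) _ (Ideal.Quotient.mk _ r) := by
  set I := Ideal.span {algebraMap R S π}
  have hI : I ^ k = (Ideal.span {π ^ k}).map (algebraMap R S) := by
    rw [Ideal.span_singleton_pow, Ideal.map_span, Set.image_singleton, map_pow]
  set f' := Ideal.Quotient.mk (Ideal.span {π ^ k}) f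
  have := IsLocalization.Away.quotient_ideal_map (S := S) f (Ideal.span {π ^ k})
  let e : S ⧸ I ^ k ≃+* Localization.Away f' :=
    (Ideal.quotEquivOfEq hI).trans
      (IsLocalization.algEquiv (Submonoid.powers f') _ _).toRingEquiv
  refine ⟨e.toRingHom.comp (evalₐ I k).toRingHom, e.surjective.comp (surjective_evalₐ I k),
    ?_, fun r => ?_⟩
  · rw [RingHom.ker_comp_of_injective _ e.injective,
      ker_evalₐ_eq_map (Submodule.fg_span_singleton _), Ideal.span_singleton_pow, Ideal.map_span,
      Set.image_singleton, map_pow]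
  · exact (IsLocalization.algEquiv (Submonoid.powers f') _ _).commutes (Ideal.Quotient.mk _ r)

theorem completed_localization_ses
    (R : Type) [CommRing R] (π : R) (hπ : π ∈ nonZeroDivisors R) (f : R) :
    -- finite level: for all n, k the sequence 0 → R/π^n →(·π^k) R/π^{n+k} → R/π^k → 0
    -- is exact (expressed elementwise in R):
    (∀ n k : ℕ,
      -- injectivity of multiplication by π^k on R/π^n into R/π^{n+k}
      (∀ x : R, π ^ k * x ∈ Ideal.span {π ^ (n + k)} → x ∈ Ideal.span {π ^ n}) ∧
      -- exactness in the middle: image of mult. by π^k = kernel of R/π^{n+k} → R/π^k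
      (∀ x : R, x ∈ Ideal.span {π ^ k} ↔ ∃ y : R, x - π ^ k * y ∈ Ideal.span {π ^ (n + k)})) ∧
    -- in the limit:
    (let S := Localization.Away f
     let π' : S := algebraMap R S π
     let C := AdicCompletion (Ideal.span {π'}) S
     let π'' : C := algebraMap S C π'
     ∀ k : ℕ,
      -- multiplication by π^k is injective on R⟨f⁻¹⟩ (in particular π is a
      -- non-zero divisor there)
      Function.Injective (fun x : C => π'' ^ k * x) ∧
      -- there is a surjection R⟨f⁻¹⟩ → (R/π^k)[f⁻¹] with kernel π^k·R⟨f⁻¹⟩,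
      -- compatible with the maps from R
      (∃ g : C →+* Localization.Away
          (Ideal.Quotient.mk (Ideal.span {π ^ k}) f),
        Function.Surjective g ∧
        RingHom.ker g = Ideal.span {π'' ^ k} ∧
        ∀ r : R, g (algebraMap S C (algebraMap R S r)) =
          algebraMap (R ⧸ Ideal.span {π ^ k}) _ (Ideal.Quotient.mk _ r)) ∧
      -- R⟨f⁻¹⟩ is π-adically complete (and separated)
      IsAdicComplete (Ideal.span {π''}) C) := by
  refine ⟨fun n k => ⟨fun _ => mem_span_pow_of_pow_mul_mem_span_pow_add hπ,
    mem_span_pow_iff_exists_sub_pow_mul_mem n k⟩, ?_⟩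
  intro S π' C π'' k
  have hπ' : IsSMulRegular S π' :=
    (isRegular_iff_mem_nonZeroDivisors.mpr
      (IsLocalization.nonZeroDivisors_le_comap (Submonoid.powers f) S hπ)).left
  have hspan : (Ideal.span {π'}).map (algebraMap S C) = Ideal.span {π''} := by
    rw [Ideal.map_span, Set.image_singleton]
  refine ⟨fun x y hxy => (AdicCompletion.isSMulRegular hπ').pow k ?_,
    exists_surjective_adicCompletion_to_localization_quotient f π k, ?_⟩
  · simpa only [Algebra.smul_def, map_pow] using hxy
  · rw [← hspan, IsAdicComplete.map_algebraMap_iff]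
    exact AdicCompletion.isAdicComplete (Submodule.fg_span_singleton π')
end

section
/- Let k be a perfect field of characteristic p and let A_n = k[[T_n]] for n ≥ 0, with injective k-algebra transition maps A_n → A_{n+1} determined by T_n ↦ (1+T_{n+1})^p − 1. Then the Frobenius endomorphism φ(x) = x^p on the colimit A_∞ = colim_n A_n is surjective. -/
/-!
In characteristic `p` we have `(1 + T)^p - 1 = T^p`, and a ring endomorphism `φ` of `k⟦T⟧` with
`T ∣ φ T` is `T`-adically continuous, hence determined by its values on constants and on `T`.
So the transition map is the expansion `f(T) ↦ f(T^p)`, and over a perfect field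
`f(T^p) = (∑ aᵢ^{1/p} Tⁱ)^p` for `f = ∑ aᵢ Tⁱ`.
-/

open PowerSeries

namespace PowerSeries

instance instCharP {R : Type*} [Semiring R] (p : ℕ) [CharP R p] : CharP R⟦X⟧ p :=
  charP_of_injective_ringHom C_injective p

theorem ringHom_ext_of_X_dvd {R S : Type*} [CommSemiring R] [CommSemiring S]
    {φ ψ : R⟦X⟧ →+* S⟦X⟧} (hC : ∀ a, φ (C a) = ψ (C a)) (hX : φ X = ψ X) (hdvd : X ∣ φ X) :
    φ = ψ := by
  have hpoly : ∀ P : Polynomial R, φ P = ψ P := by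
    suffices φ.comp Polynomial.coeToPowerSeries.ringHom =
        ψ.comp Polynomial.coeToPowerSeries.ringHom from fun P => congr($this P)
    exact Polynomial.ringHom_ext (by simpa using hC) (by simpa using hX)
  obtain ⟨u, hu⟩ := hdvd
  ext f m
  rw [eq_X_pow_mul_shift_add_trunc (m + 1) f]
  simp only [map_add, map_mul, map_pow, hpoly, ← hX, hu, mul_pow, mul_assoc, coeff_X_pow_mul',
    Nat.not_succ_le_self, if_false, zero_add]

variable {R : Type*} [CommRing R] (p : ℕ) (hp : p ≠ 0) [ExpChar R p]

theorem map_frobenius_expand (f : R⟦X⟧) : map (frobenius R p) (expand p hp f) = f ^ p :=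
  MvPowerSeries.map_frobenius_expand p hp

theorem expand_eq_pow_map_frobeniusEquiv_symm [PerfectRing R p] (f : R⟦X⟧) :
    expand p hp f = map (frobeniusEquiv R p).symm f ^ p := by
  rw [← map_frobenius_expand p hp, map_expand, ← RingHom.comp_apply (map _), ← map_comp,
    frobenius_comp_frobeniusEquiv_symm, map_id, id]

end PowerSeries

theorem ordinary_colimit_frobenius_surjective_general
    (p : ℕ) [Fact p.Prime] (k : Type) [Field k] [CharP k p] [PerfectRing k p]
    -- τ : A_n → A_{n+1} is the k-algebra map with T_n ↦ (1+T_{n+1})^p − 1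
    (τ : PowerSeries k →+* PowerSeries k)
    (hτX : τ PowerSeries.X = (1 + PowerSeries.X) ^ p - 1)
    (hτC : ∀ a : k, τ (PowerSeries.C a) = PowerSeries.C a) :
    -- every element of A_n is a p-th power in A_{n+1}; hence Frobenius is
    -- surjective on colim_n A_n
    ∀ f : PowerSeries k, ∃ g : PowerSeries k, τ f = g ^ p := by
  have hp : p ≠ 0 := (Fact.out : p.Prime).ne_zero
  have hτ : τ = (expand p hp).toRingHom := by
    have hτX' : τ X = X ^ p := by rw [hτX, add_pow_char, one_pow, add_sub_cancel_left]
    refine ringHom_ext_of_X_dvd (by simp [hτC, expand_C]) (by simp [hτX']) ?_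
    exact hτX' ▸ dvd_pow_self X hp
  intro f
  exact ⟨_, congr($hτ f).trans (expand_eq_pow_map_frobeniusEquiv_symm p hp f)⟩

theorem ordinary_colimit_frobenius_surjective
    (p : ℕ) [Fact p.Prime] (k : Type) [Field k] [CharP k p] [PerfectRing k p]
    -- τ : A_n → A_{n+1} is the k-algebra map with T_n ↦ (1+T_{n+1})^p − 1
    (τ : PowerSeries k →+* PowerSeries k)
    (hτX : τ PowerSeries.X = (1 + PowerSeries.X) ^ p - 1)
    (hτC : ∀ a : k, τ (PowerSeries.C a) = PowerSeries.C a)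
    -- τ is continuous for the T-adic topology (it is a map of complete local rings)
    (hcont : ∀ m : ℕ, ∃ N : ℕ, ∀ g : PowerSeries k,
      PowerSeries.X ^ N ∣ g → PowerSeries.X ^ m ∣ τ g) :
    -- every element of A_n is a p-th power in A_{n+1}; hence Frobenius is
    -- surjective on colim_n A_n
    ∀ f : PowerSeries k, ∃ g : PowerSeries k, τ f = g ^ p :=
  ordinary_colimit_frobenius_surjective_general p k τ hτX hτC
end

section
/- Let (A_n)_{n≥0} be a tower of local rings, each A_n/p a local ring with maximal ideal generated by two elements a_n, b_n, such that for each n, the images of a_n and b_n in A_{n+1}/p are p-th powers, and such that A_0/p maps onto the residue field modulo its maximal ideal with residue field perfect of characteristic p. Suppose further that each A_n/p is complete with respect to the ideal (a_n, b_n). Then the Frobenius endomorphism on colim_n (A_n/p) is surjective. -/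
open Finset

section Aux

variable {A : Type} [CommRing A] (p : ℕ) [Fact p.Prime] [CharP A p] (a b : A)

private lemma aux_expChar : ExpChar A p := ExpChar.prime (Fact.out)

private lemma aux_rep (k : ℕ) (e : A) (he : e ∈ Ideal.span {a, b} ^ k) :
    ∃ u : ℕ → A, e = ∑ i ∈ range (k + 1), u i * (a ^ i * b ^ (k - i)) := by
  induction k generalizing e with
  | zero => exact ⟨fun _ => e, by simp⟩
  | succ k ih =>
    rw [pow_succ] at he
    refine Submodule.mul_induction_on he ?_ ?_
    · intro r hr s hs
      obtain ⟨u, hu⟩ := ih r hr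
      obtain ⟨s1, s2, hs'⟩ := Ideal.mem_span_pair.mp hs
      refine ⟨fun j => (if j ≤ k then s2 * u j else 0) +
        (if j = 0 then 0 else s1 * u (j - 1)), ?_⟩
      have h1 : ∑ j ∈ range (k + 2), (if j ≤ k then s2 * u j else 0) * (a ^ j * b ^ (k + 1 - j))
          = r * (s2 * b) := by
        rw [Finset.sum_range_succ, if_neg (by omega), zero_mul, add_zero, hu, Finset.sum_mul]
        refine Finset.sum_congr rfl fun j hj => ?_
        have hjk : j ≤ k := Nat.lt_succ_iff.mp (Finset.mem_range.mp hj)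
        rw [if_pos hjk]
        have hkj : k + 1 - j = (k - j) + 1 := by omega
        rw [hkj, pow_succ]
        ring
      have h2 : ∑ j ∈ range (k + 2), (if j = 0 then 0 else s1 * u (j - 1)) * (a ^ j * b ^ (k + 1 - j))
          = r * (s1 * a) := by
        rw [Finset.sum_range_succ', if_pos rfl, zero_mul, add_zero, hu, Finset.sum_mul]
        refine Finset.sum_congr rfl fun j hj => ?_
        rw [if_neg (by omega)]
        have hkj : k + 1 - (j + 1) = k - j := by omega
        rw [hkj, Nat.add_sub_cancel, pow_succ]
        ring
      calc r * s = r * (s1 * a) + r * (s2 * b) := by rw [← hs']; ring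
        _ = _ := by
            rw [← h1, ← h2, ← Finset.sum_add_distrib]
            exact Finset.sum_congr rfl fun j _ => by ring
    · rintro x y ⟨u, hu⟩ ⟨w, hw⟩
      refine ⟨fun i => u i + w i, ?_⟩
      rw [hu, hw, ← Finset.sum_add_distrib]
      exact Finset.sum_congr rfl fun i _ => (add_mul _ _ _).symm

private lemma aux_mem_a : a ∈ Ideal.span {a, b} := Ideal.subset_span (by simp)
private lemma aux_mem_b : b ∈ Ideal.span {a, b} := Ideal.subset_span (by simp)

private lemma aux_step (hfr : ∀ u : A, ∃ v, u - v ^ p ∈ Ideal.span {a, b})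
    (k : ℕ) (e : A) (he : e ∈ Ideal.span {a, b} ^ k) :
    ∃ (d : Fin p × Fin p → A) (e' : A),
      (∀ y, d y ∈ Ideal.span {a, b} ^ (k / p - 1)) ∧
      e' ∈ Ideal.span {a, b} ^ (k + 1) ∧
      e = (∑ y : Fin p × Fin p, (d y) ^ p * (a ^ (y.1 : ℕ) * b ^ (y.2 : ℕ))) + e' := by
  haveI := aux_expChar (A := A) p
  have hp : 0 < p := (Fact.out : p.Prime).pos
  obtain ⟨u, hu⟩ := aux_rep a b k e he
  choose v hv using fun i => hfr (u i)
  set g : ℕ → Fin p × Fin p :=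
    fun i => (⟨i % p, Nat.mod_lt _ hp⟩, ⟨(k - i) % p, Nat.mod_lt _ hp⟩) with hg
  set V : ℕ → A := fun i => v i * (a ^ (i / p) * b ^ ((k - i) / p)) with hV
  refine ⟨fun y => ∑ i ∈ (range (k + 1)).filter (fun i => g i = y), V i,
    ∑ i ∈ range (k + 1), (u i - v i ^ p) * (a ^ i * b ^ (k - i)), ?_, ?_, ?_⟩
  · intro y
    refine Submodule.sum_mem _ fun i hi => ?_
    have hmem : V i ∈ Ideal.span {a, b} ^ (i / p + (k - i) / p) := by
      rw [hV, pow_add]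
      exact Ideal.mul_mem_left _ _
        (Ideal.mul_mem_mul (Ideal.pow_mem_pow (aux_mem_a a b) _)
          (Ideal.pow_mem_pow (aux_mem_b a b) _))
    refine Ideal.pow_le_pow_right ?_ hmem
    have hik : i ≤ k := Nat.lt_succ_iff.mp (Finset.mem_range.mp (Finset.mem_filter.mp hi).1)
    have e1 := Nat.div_add_mod i p
    have e2 := Nat.div_add_mod (k - i) p
    have m1 : i % p < p := Nat.mod_lt _ hp
    have m2 : (k - i) % p < p := Nat.mod_lt _ hp
    have hkeq : p * (i / p + (k - i) / p) + (i % p + (k - i) % p) = k := by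
      rw [Nat.mul_add]; omega
    have h3 : k / p = i / p + (k - i) / p + (i % p + (k - i) % p) / p := by
      conv_lhs => rw [← hkeq, Nat.mul_add_div hp]
    have hrr : (i % p + (k - i) % p) / p < 2 := (Nat.div_lt_iff_lt_mul hp).mpr (by omega)
    have h4 : k / p ≤ i / p + (k - i) / p + 1 := by
      rw [h3]
      exact Nat.add_le_add_left (Nat.lt_succ_iff.mp hrr) _
    exact Nat.sub_le_iff_le_add.mpr h4
  · refine Submodule.sum_mem _ fun i hi => ?_
    have hik : i ≤ k := Nat.lt_succ_iff.mp (Finset.mem_range.mp hi)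
    rw [pow_succ']
    refine Ideal.mul_mem_mul (hv i) ?_
    have hmono : a ^ i * b ^ (k - i) ∈ Ideal.span {a, b} ^ (i + (k - i)) := by
      rw [pow_add]
      exact Ideal.mul_mem_mul (Ideal.pow_mem_pow (aux_mem_a a b) _)
        (Ideal.pow_mem_pow (aux_mem_b a b) _)
    rwa [Nat.add_sub_cancel' hik] at hmono
  · have hmaps : ∀ i ∈ range (k + 1), g i ∈ (Finset.univ : Finset (Fin p × Fin p)) :=
      fun _ _ => Finset.mem_univ _
    calc e = ∑ i ∈ range (k + 1), u i * (a ^ i * b ^ (k - i)) := hu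
      _ = ∑ i ∈ range (k + 1),
            ((V i) ^ p * (a ^ (i % p) * b ^ ((k - i) % p))
              + (u i - v i ^ p) * (a ^ i * b ^ (k - i))) := by
          refine Finset.sum_congr rfl fun i _ => ?_
          have ha' : (a ^ (i / p)) ^ p * a ^ (i % p) = a ^ i := by
            rw [← pow_mul, ← pow_add, Nat.mul_comm, Nat.div_add_mod]
          have hb' : (b ^ ((k - i) / p)) ^ p * b ^ ((k - i) % p) = b ^ (k - i) := by
            rw [← pow_mul, ← pow_add, Nat.mul_comm, Nat.div_add_mod]
          have hVi : (V i) ^ p * (a ^ (i % p) * b ^ ((k - i) % p))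
              = v i ^ p * (a ^ i * b ^ (k - i)) := by
            rw [hV]
            simp only []
            rw [mul_pow, mul_pow, ← ha', ← hb']
            ring
          rw [hVi]
          ring
      _ = _ := by
          rw [Finset.sum_add_distrib]
          congr 1
          rw [← Finset.sum_fiberwise_of_maps_to hmaps
            (fun i => (V i) ^ p * (a ^ (i % p) * b ^ ((k - i) % p)))]
          refine Finset.sum_congr rfl fun y _ => ?_
          rw [sum_pow_char, Finset.sum_mul]
          refine Finset.sum_congr rfl fun i hi => ?_
          have hgi : g i = y := (Finset.mem_filter.mp hi).2
          have h1 : i % p = (y.1 : ℕ) := by rw [← hgi]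
          have h2 : (k - i) % p = (y.2 : ℕ) := by rw [← hgi]
          rw [h1, h2]

private lemma aux_key (hfr : ∀ u : A, ∃ v, u - v ^ p ∈ Ideal.span {a, b})
    (hc : IsAdicComplete (Ideal.span {a, b}) A) (x : A) :
    ∃ c : Fin p × Fin p → A,
      x = ∑ y : Fin p × Fin p, (c y) ^ p * (a ^ (y.1 : ℕ) * b ^ (y.2 : ℕ)) := by
  haveI := aux_expChar (A := A) p
  have hp : 0 < p := (Fact.out : p.Prime).pos
  have hsmul : ∀ N : ℕ, ((Ideal.span {a, b} : Ideal A) ^ N • ⊤ : Submodule A A)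
      = Ideal.span {a, b} ^ N := by
    intro N; rw [smul_eq_mul, Ideal.mul_top]
  choose D E hD hE hrep using aux_step p a b hfr
  let seq : ∀ k : ℕ, {e : A // e ∈ Ideal.span {a, b} ^ k} := fun k =>
    Nat.rec (motive := fun k => {e : A // e ∈ Ideal.span {a, b} ^ k})
      ⟨x, by rw [pow_zero, Ideal.one_eq_top]; exact Submodule.mem_top⟩
      (fun k prev => ⟨E k prev.1 prev.2, hE k prev.1 prev.2⟩) k
  let d : ℕ → Fin p × Fin p → A := fun k => D k (seq k).1 (seq k).2
  have hDm : ∀ t y, d t y ∈ Ideal.span {a, b} ^ (t / p - 1) :=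
    fun t y => hD t (seq t).1 (seq t).2 y
  have claimA : ∀ k : ℕ, x = (∑ y : Fin p × Fin p,
      (∑ t ∈ range k, d t y) ^ p * (a ^ (y.1 : ℕ) * b ^ (y.2 : ℕ))) + (seq k).1 := by
    intro k
    induction k with
    | zero => simp [zero_pow hp.ne', show (seq 0).1 = x from rfl]
    | succ k ih =>
      have hr : (seq k).1 = (∑ y : Fin p × Fin p,
          (d k y) ^ p * (a ^ (y.1 : ℕ) * b ^ (y.2 : ℕ))) + (seq (k + 1)).1 :=
        hrep k (seq k).1 (seq k).2
      rw [ih, hr, ← add_assoc, ← Finset.sum_add_distrib]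
      congr 1
      refine Finset.sum_congr rfl fun y _ => ?_
      rw [Finset.sum_range_succ, add_pow_char]
      ring
  have hcauchy : ∀ y : Fin p × Fin p, ∀ {m n : ℕ}, m ≤ n →
      (∑ t ∈ range (p * (m + 1)), d t y) ≡ (∑ t ∈ range (p * (n + 1)), d t y)
        [SMOD ((Ideal.span {a, b} : Ideal A) ^ m • ⊤ : Submodule A A)] := by
    intro y m n hmn
    rw [SModEq.sub_mem, hsmul]
    have h1 : p * (m + 1) ≤ p * (n + 1) := Nat.mul_le_mul_left _ (by omega)
    have hmem : (∑ t ∈ range (p * (n + 1)), d t y) - (∑ t ∈ range (p * (m + 1)), d t y)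
        ∈ Ideal.span {a, b} ^ m := by
      rw [← Finset.sum_Ico_eq_sub _ h1]
      refine Submodule.sum_mem _ fun t ht => ?_
      have ht1 : p * (m + 1) ≤ t := (Finset.mem_Ico.mp ht).1
      have htm : m ≤ t / p - 1 := by
        have : m + 1 ≤ t / p := (Nat.le_div_iff_mul_le hp).mpr
          (by rw [Nat.mul_comm]; exact ht1)
        omega
      exact Ideal.pow_le_pow_right htm (hDm t y)
    have : (∑ t ∈ range (p * (m + 1)), d t y) - (∑ t ∈ range (p * (n + 1)), d t y)
        = -((∑ t ∈ range (p * (n + 1)), d t y) - (∑ t ∈ range (p * (m + 1)), d t y)) := by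
      ring
    rw [this]
    exact Submodule.neg_mem _ hmem
  choose c hc' using fun y : Fin p × Fin p =>
    hc.toIsPrecomplete.prec (f := fun N => ∑ t ∈ range (p * (N + 1)), d t y) (hcauchy y)
  refine ⟨c, ?_⟩
  have hfinal : ∀ N : ℕ,
      x - (∑ y : Fin p × Fin p, (c y) ^ p * (a ^ (y.1 : ℕ) * b ^ (y.2 : ℕ)))
        ∈ Ideal.span {a, b} ^ N := by
    intro N
    have hsplit : ∑ y : Fin p × Fin p,
        (((∑ t ∈ range (p * (N + 1)), d t y) - c y) ^ p * (a ^ (y.1 : ℕ) * b ^ (y.2 : ℕ)))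
        = (∑ y : Fin p × Fin p,
            (∑ t ∈ range (p * (N + 1)), d t y) ^ p * (a ^ (y.1 : ℕ) * b ^ (y.2 : ℕ)))
          - ∑ y : Fin p × Fin p, (c y) ^ p * (a ^ (y.1 : ℕ) * b ^ (y.2 : ℕ)) := by
      rw [← Finset.sum_sub_distrib]
      refine Finset.sum_congr rfl fun y _ => ?_
      rw [sub_pow_char]
      ring
    have heq : x - (∑ y : Fin p × Fin p, (c y) ^ p * (a ^ (y.1 : ℕ) * b ^ (y.2 : ℕ)))
        = (seq (p * (N + 1))).1
          + ∑ y : Fin p × Fin p,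
              (((∑ t ∈ range (p * (N + 1)), d t y) - c y) ^ p
                * (a ^ (y.1 : ℕ) * b ^ (y.2 : ℕ))) := by
      rw [claimA (p * (N + 1)), hsplit]
      ring
    rw [heq]
    refine Submodule.add_mem _ ?_ (Submodule.sum_mem _ fun y _ => ?_)
    · refine Ideal.pow_le_pow_right ?_ (seq (p * (N + 1))).2
      calc N ≤ N + 1 := Nat.le_succ N
        _ ≤ p * (N + 1) := Nat.le_mul_of_pos_left _ hp
    · have hdy : (∑ t ∈ range (p * (N + 1)), d t y) - c y ∈ Ideal.span {a, b} ^ N := by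
        have := (hc' y N)
        rw [SModEq.sub_mem, hsmul] at this
        exact this
      have hpowmem : ((∑ t ∈ range (p * (N + 1)), d t y) - c y) ^ p
          ∈ Ideal.span {a, b} ^ N := by
        have h1 := Ideal.pow_mem_pow hdy p
        rw [← pow_mul] at h1
        exact Ideal.pow_le_pow_right (Nat.le_mul_of_pos_right _ hp) h1
      exact Ideal.mul_mem_right _ _ hpowmem
  have hz := hc.toIsHausdorff.haus
    (x - (∑ y : Fin p × Fin p, (c y) ^ p * (a ^ (y.1 : ℕ) * b ^ (y.2 : ℕ))))
    (fun N => SModEq.zero.mpr (by rw [hsmul]; exact hfinal N))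
  exact sub_eq_zero.mp hz

end Aux

theorem supersingular_tower_frobenius_surjective
    (p : ℕ) [Fact p.Prime]
    (R : ℕ → Type) [∀ n, CommRing (R n)] [∀ n, IsLocalRing (R n)]
    -- each R n = A_n/p has characteristic p
    (hchar : ∀ n, CharP (R n) p)
    -- the transition maps of the tower
    (T : ∀ n m, n ≤ m → (R n →+* R m))
    (hT_id : ∀ n, T n n le_rfl = RingHom.id (R n))
    (hT_comp : ∀ (n m l : ℕ) (h1 : n ≤ m) (h2 : m ≤ l) (x : R n),
      T m l h2 (T n m h1 x) = T n l (h1.trans h2) x)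
    (a b : ∀ n, R n)
    -- the maximal ideal of R n is generated by a n and b n
    (hmax : ∀ n, IsLocalRing.maximalIdeal (R n) = Ideal.span {a n, b n})
    -- a n and b n become p-th powers in R (n+1)
    (hpa : ∀ n, ∃ y : R (n + 1), T n (n + 1) (Nat.le_succ n) (a n) = y ^ p)
    (hpb : ∀ n, ∃ y : R (n + 1), T n (n + 1) (Nat.le_succ n) (b n) = y ^ p)
    -- the residue fields are perfect of characteristic p (Frobenius surjective)
    (hres : ∀ n (x : IsLocalRing.ResidueField (R n)), ∃ y, y ^ p = x)
    -- each R n is complete with respect to the ideal (a n, b n)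
    (hcomplete : ∀ n, IsAdicComplete (Ideal.span {a n, b n}) (R n)) :
    -- the Frobenius endomorphism of colim_n R n is surjective
    ∀ (n : ℕ) (x : R n), ∃ (m : ℕ) (h : n ≤ m) (y : R m), T n m h x = y ^ p := by
  intro n x
  haveI := hchar n
  haveI := hchar (n + 1)
  haveI : ExpChar (R (n + 1)) p := ExpChar.prime Fact.out
  have hfr : ∀ u : R n, ∃ v, u - v ^ p ∈ Ideal.span {a n, b n} := by
    intro u
    obtain ⟨w, hw⟩ := hres n (IsLocalRing.residue (R n) u)
    obtain ⟨v, rfl⟩ := IsLocalRing.residue_surjective w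
    refine ⟨v, ?_⟩
    rw [← hmax n]
    have hzero : IsLocalRing.residue (R n) (u - v ^ p) = 0 := by
      rw [map_sub, map_pow, hw, sub_self]
    exact Ideal.Quotient.eq_zero_iff_mem.mp hzero
  obtain ⟨c, hcx⟩ := aux_key p (a n) (b n) hfr (hcomplete n) x
  obtain ⟨α, hα⟩ := hpa n
  obtain ⟨β, hβ⟩ := hpb n
  refine ⟨n + 1, Nat.le_succ n,
    ∑ y : Fin p × Fin p, (T n (n + 1) (Nat.le_succ n)) (c y) * (α ^ (y.1 : ℕ) * β ^ (y.2 : ℕ)),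
    ?_⟩
  rw [hcx, map_sum, sum_pow_char]
  refine Finset.sum_congr rfl fun y _ => ?_
  rw [map_mul, map_pow, map_mul, map_pow, map_pow, hα, hβ]
  rw [pow_right_comm α p (y.1 : ℕ), pow_right_comm β p (y.2 : ℕ), mul_pow, mul_pow]
end

section
/- Let O be a complete discrete valuation ring with uniformizer p and residue characteristic p, and fix n ≥ 1. Consider the extension of complete local rings O[ζ_{p^n}][[T_{n-1}]] ⊆ O[ζ_{p^n}][[T_n]] where (1+T_n)^p = 1+T_{n-1}. Then this extension is finite free of rank p, and the O[ζ_{p^n}][[T_n]]-module Hom_{O[ζ_{p^n}][[T_{n-1}]]}(O[ζ_{p^n}][[T_n]], O[ζ_{p^n}][[T_{n-1}]]) is free of rank 1 generated by (1/p)·Tr, where Tr is the trace form of the extension. -/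
/-!
Write `S = (1 + X)^p - 1`. Since `p` divides the binomial coefficients, `S` is a distinguished
polynomial of degree `p` for the `p`-adic topology of `O'`, which is `p`-adically complete as a
finite `O`-algebra. Weierstrass division by `S`, iterated, expands every `F ∈ O'[[X]]` as
`F = ∑_j S^j r_j` with `deg r_j < p`, and uniqueness of the division makes this expansion unique;
as `ι` substitutes `S` for `X`, this says that `1, X, …, X^(p-1)` is a basis of `O'[[X]]` over
`A = ι(O'[[X]])`, hence so is `1, Y, …, Y^(p-1)` for the unit `Y = 1 + X`.

In this basis `Y^p = ι(Y)` is a unit of `A`, so multiplication by `Y^j`, `0 < j < p`, has no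
diagonal entries: the trace is `p` times the constant coordinate `t`. The `k`-th coordinate of `x`
is `t(x Y^(-k))`, so the pairing `(x, x') ↦ t(x x')` is perfect: `t` generates
`Hom_A(O'[[X]], A)`.
-/

open PowerSeries

universe u

theorem IsAdicComplete.of_finite {R M : Type u} [CommRing R] [IsNoetherianRing R] (I : Ideal R)
    [IsAdicComplete I R] [AddCommGroup M] [Module R M] [Module.Finite R M] :
    IsAdicComplete I M := by
  rw [← AdicCompletion.of_bijective_iff]
  have hone : AdicCompletion.of I R 1 = 1 := by ext; rfl
  have : ⇑(AdicCompletion.of I M) = AdicCompletion.ofTensorProduct I M ∘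
      TensorProduct.congr (AdicCompletion.ofLinearEquiv I R) (LinearEquiv.refl R M) ∘
      (TensorProduct.lid R M).symm := by
    funext x
    simp [AdicCompletion.ofTensorProduct_tmul, hone]
  rw [this]
  exact (AdicCompletion.ofTensorProduct_bijective_of_finite_of_isNoetherian I M).comp
    (LinearEquiv.bijective _ |>.comp (LinearEquiv.bijective _))

theorem IsAdicComplete.span_algebraMap_of_finite {R S : Type u} [CommRing R] [IsNoetherianRing R]
    [CommRing S] [Algebra R S] [Module.Finite R S] (r : R) [IsAdicComplete (Ideal.span {r}) R] :
    IsAdicComplete (Ideal.span {algebraMap R S r}) S := by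
  have := IsAdicComplete.of_finite (Ideal.span {r}) (M := S)
  rw [← Set.image_singleton, ← Ideal.map_span]
  exact { toIsHausdorff := IsHausdorff.map_algebraMap_iff.mpr inferInstance
          toIsPrecomplete := IsPrecomplete.map_algebraMap_iff.mpr inferInstance }

theorem pow_mem_span_range_one_add_pow {A S : Type*} [CommRing A] [CommRing S] [Module A S]
    (x : S) {i p : ℕ} (hi : i < p) :
    x ^ i ∈ Submodule.span A (Set.range fun j : Fin p => (1 + x) ^ (j : ℕ)) := by
  rw [show x ^ i = ((1 + x) + (-1)) ^ i by ring, add_pow]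
  refine Submodule.sum_mem _ fun j hj => ?_
  have hj : j < p := by rw [Finset.mem_range] at hj; omega
  rw [mul_assoc, mul_comm, show (-1 : S) ^ (i - j) * i.choose j
    = (((-1) ^ (i - j) * i.choose j : ℤ) : S) by push_cast; ring, ← zsmul_eq_mul]
  exact Submodule.smul_of_tower_mem _ _ (Submodule.subset_span ⟨⟨j, hj⟩, rfl⟩)

namespace Polynomial

variable {R : Type*} [CommRing R]

theorem coeff_sum_fin_C_mul_X_pow {n : ℕ} (c : Fin n → R) (i : Fin n) :
    (∑ j : Fin n, C (c j) * X ^ (j : ℕ)).coeff i = c i := by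
  simp [Fin.val_inj]

theorem sum_fin_C_coeff_mul_X_pow {n : ℕ} {p : R[X]} (hp : p.degree < n) :
    ∑ j : Fin n, C (p.coeff j) * X ^ (j : ℕ) = p := by
  ext m
  by_cases hm : m < n
  · exact coeff_sum_fin_C_mul_X_pow (fun j : Fin n => p.coeff j) ⟨m, hm⟩
  · rw [coeff_eq_zero_of_degree_lt (hp.trans_le (by exact_mod_cast not_lt.mp hm)),
      finsetSum_coeff]
    exact Finset.sum_eq_zero fun j _ => by simp; omega

theorem natDegree_one_add_X_pow_sub_one [Nontrivial R] {p : ℕ} (hp : 0 < p) :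
    ((1 + X) ^ p - 1 : R[X]).natDegree = p := by
  have hpow : ((1 + X : R[X]) ^ p).natDegree = p := by
    rw [add_comm, ← C_1, natDegree_pow_X_add_C]
  rw [natDegree_sub_eq_left_of_natDegree_lt (by simp [hpow, hp]), hpow]

theorem isDistinguishedAt_one_add_X_pow_sub_one [Nontrivial R] {p : ℕ} (hp : p.Prime) :
    ((1 + X) ^ p - 1 : R[X]).IsDistinguishedAt (Ideal.span {(p : R)}) := by
  have hdeg := natDegree_one_add_X_pow_sub_one (R := R) hp.pos
  refine ⟨⟨fun {n} hn => ?_⟩, ?_⟩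
  · rw [hdeg] at hn
    rw [coeff_sub, coeff_one_add_X_pow, coeff_one]
    rcases Nat.eq_zero_or_pos n with rfl | hn0
    · simp
    · rw [if_neg hn0.ne', sub_zero, Ideal.mem_span_singleton]
      exact Nat.cast_dvd_cast (hp.dvd_choose_self hn0.ne' hn)
  · rw [Monic, leadingCoeff, hdeg, coeff_sub, coeff_one_add_X_pow, coeff_one, if_neg hp.ne_zero,
      Nat.choose_self, Nat.cast_one, sub_zero]

end Polynomial

namespace PowerSeries

variable {Γ : Type*} [CommRing Γ]

noncomputable def shift (f : Γ⟦X⟧) : Γ⟦X⟧ := mk fun j => coeff (j + 1) f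

section Substitution

variable {ι : Γ⟦X⟧ →+* Γ⟦X⟧} {g : Γ⟦X⟧} (hιX : ι X = g) (hιC : ∀ a, ι (C a) = C a)
include hιX hιC

theorem map_eq_C_add_mul_map_shift (f : Γ⟦X⟧) :
    ι f = C (constantCoeff f) + g * ι (shift f) := by
  conv_lhs => rw [eq_X_mul_shift_add_const f]
  rw [map_add, map_mul, hιX, hιC, add_comm, shift]

theorem sum_map_mul_X_pow_eq {n : ℕ} (h : Fin n → Γ⟦X⟧) :
    ∑ i, ι (h i) * X ^ (i : ℕ) = g * ∑ i, ι (shift (h i)) * X ^ (i : ℕ)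
      + ((∑ i : Fin n, Polynomial.C (constantCoeff (h i)) * Polynomial.X ^ (i : ℕ) :
          Polynomial Γ) : Γ⟦X⟧) := by
  rw [← Polynomial.coeToPowerSeries.ringHom_apply, map_sum]
  simp only [map_eq_C_add_mul_map_shift hιX hιC (h _), add_mul, Finset.sum_add_distrib,
    Finset.mul_sum, mul_assoc, map_mul, map_pow, Polynomial.coeToPowerSeries.ringHom_apply,
    Polynomial.coe_C, Polynomial.coe_X, add_comm]

end Substitution

section Weierstrass

variable {I : Ideal Γ} {g : Polynomial Γ} (hg : g.IsDistinguishedAt I) (hI : I ≠ ⊤)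
include hg hI

theorem _root_.Polynomial.IsDistinguishedAt.toNat_order_map_eq_natDegree :
    ((g : Γ⟦X⟧).map (Ideal.Quotient.mk I)).order.toNat = g.natDegree := by
  rw [← hg.coe_natDegree_eq_order_map (g : Γ⟦X⟧) 1
    (by rwa [map_one, ← Ideal.ne_top_iff_one]) (mul_one _).symm, ENat.toNat_natCast]

variable {ι : Γ⟦X⟧ →+* Γ⟦X⟧} (hιX : ι X = g) (hιC : ∀ a, ι (C a) = C a)
include hιX hιC

theorem eq_zero_of_sum_map_mul_X_pow_eq_zero [IsHausdorff I Γ] (h : Fin g.natDegree → Γ⟦X⟧)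
    (hsum : ∑ i, ι (h i) * X ^ (i : ℕ) = 0) : h = 0 := by
  suffices ∀ J (h : Fin g.natDegree → Γ⟦X⟧), ∑ i, ι (h i) * X ^ (i : ℕ) = 0 →
      ∀ i, ∀ j < J, coeff j (h i) = 0 by
    ext i j
    exact this (j + 1) h hsum i j j.lt_succ_self
  intro J
  induction J with
  | zero => intro h _ i j hj; omega
  | succ J ih =>
    intro h hsum i j hj
    rw [sum_map_mul_X_pow_eq hιX hιC] at hsum
    obtain ⟨hq, hr⟩ := (hg.isWeierstrassDivisorAt hI).eq_of_mul_add_eq_mul_add (q' := 0) (r' := 0)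
      ((Polynomial.degree_sum_fin_lt _).trans_eq (by rw [hg.toNat_order_map_eq_natDegree hI]))
      (by simp) (by simpa using hsum)
    rcases j with _ | j
    · have hri := congrArg (Polynomial.coeff · i) hr
      simp only [Polynomial.coeff_sum_fin_C_mul_X_pow, Polynomial.coeff_zero] at hri
      simpa using hri
    · simpa [shift] using ih (fun i => shift (h i)) hq i j (by omega)

theorem exists_sum_map_mul_X_pow_eq [IsAdicComplete I Γ] (hg0 : g.coeff 0 = 0) (F : Γ⟦X⟧) :
    ∃ h : Fin g.natDegree → Γ⟦X⟧, ∑ i, ι (h i) * X ^ (i : ℕ) = F := by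
  set H := hg.isWeierstrassDivisorAt hI
  let h : Γ⟦X⟧ → Fin g.natDegree → Γ⟦X⟧ := fun F i =>
    mk fun j => (H.mod ((fun f => H.div f)^[j] F)).coeff i
  have hshift (F : Γ⟦X⟧) (i) : shift (h F i) = h (H.div F) i := by
    ext j
    simp [h, shift, Function.iterate_succ_apply]
  have hconst (F : Γ⟦X⟧) (i) : constantCoeff (h F i) = (H.mod F).coeff i := by
    simp [h, ← coeff_zero_eq_constantCoeff_apply]
  have hdvd (J : ℕ) : ∀ F, (g : Γ⟦X⟧) ^ J ∣ F - ∑ i, ι (h F i) * X ^ (i : ℕ) := by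
    induction J with
    | zero => simp
    | succ J ih =>
      intro F
      obtain ⟨hdeg, heq⟩ := H.isWeierstrassDivisionAt_div_mod F
      rw [hg.toNat_order_map_eq_natDegree hI] at hdeg
      rw [sum_map_mul_X_pow_eq hιX hιC (h F)]
      simp only [hshift, hconst]
      rw [Polynomial.sum_fin_C_coeff_mul_X_pow hdeg]
      have e : F - ((g : Γ⟦X⟧) * ∑ i, ι (h (H.div F) i) * X ^ (i : ℕ) + H.mod F)
          = g * (H.div F - ∑ i, ι (h (H.div F) i) * X ^ (i : ℕ)) := by
        linear_combination heq
      rw [e, pow_succ']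
      exact mul_dvd_mul_left _ (ih _)
  have hX : X ∣ (g : Γ⟦X⟧) := by
    rwa [X_dvd_iff, Polynomial.constantCoeff_coe]
  refine ⟨h F, ?_⟩
  ext m
  have := (pow_dvd_pow_of_dvd hX (m + 1)).trans (hdvd (m + 1) F)
  rw [X_pow_dvd_iff] at this
  exact (sub_eq_zero.mp (this m m.lt_succ_self)).symm

theorem exists_basis_X_pow [IsAdicComplete I Γ] (hg0 : g.coeff 0 = 0) :
    ∃ b : Module.Basis (Fin g.natDegree) ι.range Γ⟦X⟧, ∀ i, b i = X ^ (i : ℕ) := by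
  have hli : LinearIndependent ι.range fun i : Fin g.natDegree => (X : Γ⟦X⟧) ^ (i : ℕ) := by
    rw [Fintype.linearIndependent_iff]
    intro c hc
    choose h hh using fun i => (c i).2
    have := eq_zero_of_sum_map_mul_X_pow_eq_zero hg hI hιX hιC h
      (by simpa [hh, Subring.smul_def] using hc)
    intro i
    ext
    simp [← hh, this]
  have hsp : ⊤ ≤ Submodule.span ι.range
      (Set.range fun i : Fin g.natDegree => (X : Γ⟦X⟧) ^ (i : ℕ)) := by
    rintro F -
    obtain ⟨h, rfl⟩ := exists_sum_map_mul_X_pow_eq hg hI hιX hιC hg0 F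
    exact Submodule.sum_mem _ fun i _ =>
      Submodule.smul_mem _ (⟨ι (h i), h i, rfl⟩ : ι.range) (Submodule.subset_span ⟨i, rfl⟩)
  exact ⟨Module.Basis.mk hli hsp, Module.Basis.mk_apply hli hsp⟩

end Weierstrass

theorem exists_basis_one_add_X_pow [Nontrivial Γ] {p : ℕ} (hp : p.Prime)
    [IsAdicComplete (Ideal.span {(p : Γ)}) Γ] {ι : Γ⟦X⟧ →+* Γ⟦X⟧}
    (hιX : ι X = (1 + X) ^ p - 1) (hιC : ∀ a, ι (C a) = C a) :
    ∃ b : Module.Basis (Fin p) ι.range Γ⟦X⟧, ∀ i, b i = (1 + X) ^ (i : ℕ) := by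
  have hI : Ideal.span {(p : Γ)} ≠ ⊤ := fun h =>
    not_subsingleton Γ (h ▸ inferInstance : IsHausdorff (⊤ : Ideal Γ) Γ).subsingleton
  have hdeg := Polynomial.natDegree_one_add_X_pow_sub_one (R := Γ) hp.pos
  obtain ⟨bX, hbX⟩ := exists_basis_X_pow (Polynomial.isDistinguishedAt_one_add_X_pow_sub_one hp)
    hI (by simpa using hιX) hιC (by simp [Polynomial.coeff_one_add_X_pow])
  have hspan : ⊤ ≤ Submodule.span ι.range
      (Set.range fun i : Fin p => (1 + X : Γ⟦X⟧) ^ (i : ℕ)) := by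
    rw [← bX.span_eq, Submodule.span_le]
    rintro _ ⟨i, rfl⟩
    rw [hbX]
    exact pow_mem_span_range_one_add_pow X (i.isLt.trans_eq hdeg)
  exact ⟨basisOfTopLeSpanOfCardEqFinrank _ hspan
    (by simp [Module.finrank_eq_card_basis bX, hdeg]), fun i => by simp⟩

end PowerSeries

namespace Module.Basis

variable {A R : Type*} [CommRing A] [CommRing R] [Algebra A R] {d : ℕ} [NeZero d]
  {b : Basis (Fin d) A R} {y : Rˣ} {v : Aˣ}
  (hb : ∀ i, b i = (y : R) ^ (i : ℕ)) (hv : algebraMap A R v = y ^ d)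
include hb hv

theorem repr_zpow (m : ℤ) (i : Fin d) :
    b.repr ↑(y ^ m) i = if (i : ℤ) = m % d then ↑(v ^ (m / d)) else 0 := by
  have hd : (0 : ℤ) < d := by exact_mod_cast NeZero.pos d
  obtain ⟨k, hk⟩ := Int.eq_ofNat_of_zero_le (Int.emod_nonneg m hd.ne')
  have hkd : k < d := by have := Int.emod_lt_of_pos m hd; omega
  have hv' : Units.map (algebraMap A R : A →* R) v = y ^ d := Units.ext hv
  have hy : y ^ m = Units.map (algebraMap A R : A →* R) (v ^ (m / d)) * y ^ k := by
    rw [map_zpow, hv', ← zpow_natCast, ← zpow_mul, ← zpow_natCast y k, ← zpow_add, ← hk,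
      Int.mul_ediv_add_emod]
  replace hy : ((y ^ m : Rˣ) : R) = (↑(v ^ (m / d)) : A) • b ⟨k, hkd⟩ := by
    rw [hy, hb, Algebra.smul_def]
    rfl
  rw [hy, map_smul, repr_self, Finsupp.smul_apply, Finsupp.single_apply, hk]
  simp [Fin.ext_iff, eq_comm]

theorem coord_zero_zpow {m : ℤ} (hm : |m| < d) :
    b.coord 0 ↑(y ^ m) = if m = 0 then 1 else 0 := by
  rw [coord_apply, repr_zpow hb hv]
  by_cases h0 : m = 0
  · simp [h0]
  · have hd : ¬ (d : ℤ) ∣ m := fun h => h0 (Int.eq_zero_of_abs_lt_dvd h hm)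
    simp [h0, eq_comm, hd]

theorem repr_eq_coord_zero_mul_zpow (x : R) (k : Fin d) :
    b.repr x k = b.coord 0 (x * ↑(y ^ (-(k : ℤ)))) := by
  suffices b.coord k = b.coord 0 ∘ₗ LinearMap.mulRight A ((y ^ (-(k : ℤ)) : Rˣ) : R) from
    LinearMap.congr_fun this x
  refine b.ext fun i => ?_
  rw [coord_apply, repr_self, LinearMap.comp_apply, LinearMap.mulRight_apply, hb,
    ← Units.val_pow_eq_pow_val, ← zpow_natCast, ← Units.val_mul, ← zpow_add,
    coord_zero_zpow hb hv (abs_lt.mpr ⟨by omega, by omega⟩), Finsupp.single_apply]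
  exact if_congr (by rw [Fin.ext_iff]; omega) rfl rfl

theorem trace_eq_mul_coord_zero (x : R) : Algebra.trace A R x = d * b.coord 0 x := by
  have hk (k : Fin d) : x * b k * ↑(y ^ (-(k : ℤ))) = x := by
    rw [hb, mul_assoc, ← Units.val_pow_eq_pow_val, ← zpow_natCast, ← Units.val_mul, ← zpow_add,
      add_neg_cancel, zpow_zero, Units.val_one, mul_one]
  calc Algebra.trace A R x = ∑ k : Fin d, b.coord 0 x := by
        rw [Algebra.trace_eq_matrix_trace b, Matrix.trace]
        refine Finset.sum_congr rfl fun k _ => ?_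
        rw [Matrix.diag_apply, Algebra.leftMulMatrix_eq_repr_mul,
          repr_eq_coord_zero_mul_zpow hb hv, hk]
    _ = d * b.coord 0 x := by simp

theorem existsUnique_eq_coord_zero_mul (φ : R →ₗ[A] A) :
    ∃! c : R, ∀ x, φ x = b.coord 0 (c * x) := by
  set c₀ := ∑ j, φ (b j) • ((y ^ (-(j : ℤ)) : Rˣ) : R)
  have hc₀ : φ = b.coord 0 ∘ₗ LinearMap.mulLeft A c₀ := by
    refine b.ext fun i => ?_
    rw [LinearMap.comp_apply, LinearMap.mulLeft_apply, Finset.sum_mul, map_sum]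
    simp_rw [smul_mul_assoc, map_smul, mul_comm _ (b i), ← repr_eq_coord_zero_mul_zpow hb hv,
      repr_self]
    simp [Finsupp.single_apply]
  refine ⟨c₀, fun x => LinearMap.congr_fun hc₀ x, fun c hc => b.ext_elem fun k => ?_⟩
  rw [repr_eq_coord_zero_mul_zpow hb hv, repr_eq_coord_zero_mul_zpow hb hv, ← hc, hc₀]
  rfl

end Module.Basis

theorem inverse_different_ordinary_general
    (p : ℕ) [Fact p.Prime] (n : ℕ)
    (O : Type) [CommRing O] [IsDomain O] [IsDiscreteValuationRing O]
    [IsAdicComplete (IsLocalRing.maximalIdeal O) O]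
    -- p is a uniformizer of O
    (hunif : Irreducible (p : O)) :
    -- O' = O[ζ_{p^n}]
    let O' := AdjoinRoot (Polynomial.cyclotomic (p ^ n) O)
    ∀ (ι : PowerSeries O' →+* PowerSeries O'),
      ι PowerSeries.X = (1 + PowerSeries.X) ^ p - 1 →
      (∀ a : O', ι (PowerSeries.C (R := O') a) = PowerSeries.C (R := O') a) →
      (∀ m : ℕ, ∃ N : ℕ, ∀ g : PowerSeries O',
        PowerSeries.X ^ N ∣ g → PowerSeries.X ^ m ∣ ι g) →
      -- A = O'[[T_{n-1}]] sitting inside R = O'[[T_n]]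
      ∀ A : Subring (PowerSeries O'), A = ι.range →
        -- the extension is finite free of rank p
        Module.Finite A (PowerSeries O') ∧
        Module.Free A (PowerSeries O') ∧
        Module.finrank A (PowerSeries O') = p ∧
        -- Hom_A(B, A) is free of rank one, generated by t = (1/p)·Tr
        (∃ t : PowerSeries O' →ₗ[A] A,
          (∀ x : PowerSeries O',
            (p : A) * t x = Algebra.trace A (PowerSeries O') x) ∧
          (∀ φ : PowerSeries O' →ₗ[A] A,
            ∃! b : PowerSeries O', ∀ x, φ x = t (b * x))) := by
  intro O' ι hιX hιC _ A hA
  subst hA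
  have hp : p.Prime := Fact.out
  have : NeZero p := ⟨hp.ne_zero⟩
  have : Module.Finite O O' := (Polynomial.cyclotomic.monic (p ^ n) O).finite_adjoinRoot
  have : Nontrivial O' := AdjoinRoot.nontrivial _ (by
    rw [Polynomial.degree_cyclotomic]
    exact_mod_cast (Nat.totient_pos.mpr (pow_pos hp.pos n)).ne')
  have : IsAdicComplete (Ideal.span {(p : O)}) O := hunif.maximalIdeal_eq ▸ inferInstance
  have : IsAdicComplete (Ideal.span {(p : O')}) O' := by
    simpa using IsAdicComplete.span_algebraMap_of_finite (S := O') (p : O)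
  obtain ⟨b, hb⟩ := exists_basis_one_add_X_pow hp hιX hιC
  have hY : IsUnit (1 + X : O'⟦X⟧) := isUnit_iff_constantCoeff.mpr (by simp)
  have hbY : ∀ i, b i = (hY.unit : O'⟦X⟧) ^ (i : ℕ) := by simpa using hb
  have hv : algebraMap ι.range O'⟦X⟧ (Units.map ι.rangeRestrict.toMonoidHom hY.unit)
      = hY.unit ^ p := by
    change ι _ = _
    simp [hιX]
  refine ⟨.of_basis b, .of_basis b, by simp [Module.finrank_eq_card_basis b], b.coord 0,
    fun x => (b.trace_eq_mul_coord_zero hbY hv x).symm, b.existsUnique_eq_coord_zero_mul hbY hv⟩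

theorem inverse_different_ordinary
    (p : ℕ) [Fact p.Prime] (n : ℕ) (hn : 1 ≤ n)
    (O : Type) [CommRing O] [IsDomain O] [IsDiscreteValuationRing O]
    [IsAdicComplete (IsLocalRing.maximalIdeal O) O]
    -- p is a uniformizer of O
    (hunif : Irreducible (p : O)) :
    -- O' = O[ζ_{p^n}]
    let O' := AdjoinRoot (Polynomial.cyclotomic (p ^ n) O)
    ∀ (ι : PowerSeries O' →+* PowerSeries O'),
      ι PowerSeries.X = (1 + PowerSeries.X) ^ p - 1 →
      (∀ a : O', ι (PowerSeries.C (R := O') a) = PowerSeries.C (R := O') a) →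
      (∀ m : ℕ, ∃ N : ℕ, ∀ g : PowerSeries O',
        PowerSeries.X ^ N ∣ g → PowerSeries.X ^ m ∣ ι g) →
      -- A = O'[[T_{n-1}]] sitting inside R = O'[[T_n]]
      ∀ A : Subring (PowerSeries O'), A = ι.range →
        -- the extension is finite free of rank p
        Module.Finite A (PowerSeries O') ∧
        Module.Free A (PowerSeries O') ∧
        Module.finrank A (PowerSeries O') = p ∧
        -- Hom_A(B, A) is free of rank one, generated by t = (1/p)·Tr
        (∃ t : PowerSeries O' →ₗ[A] A,
          (∀ x : PowerSeries O',
            (p : A) * t x = Algebra.trace A (PowerSeries O') x) ∧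
          (∀ φ : PowerSeries O' →ₗ[A] A,
            ∃! b : PowerSeries O', ∀ x, φ x = t (b * x))) :=
  inverse_different_ordinary_general p n O hunif
end

section
/- Let A ⊆ B be the extension of complete local rings A = O[[q^{1/p^{n-1}}]] and B = O[[q^{1/p^n}]] over a complete DVR O of mixed characteristic (0,p) containing a primitive p^n-th root of unity, with q^{1/p^{n-1}} = (q^{1/p^n})^p. Then Hom_A(B, A) is a free B-module of rank 1 generated by (1/p)·q^{1/p^n − 1/p^{n-1}}·Tr_{B/A}, where Tr_{B/A} is the trace form. -/
/-!
`B = R⟦X⟧` is free over `A = R⟦X^p⟧` with basis `1, X, …, X^{p-1}`, the `i`-th coordinate of `f`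
being its residue part `∑ₖ a_{pk+i} X^{pk}`. Let `t` be the last coordinate. Then
`t(X^{p-1-i} X^j) = δᵢⱼ`, so the bases `(X^i)` and `(X^{p-1-i})` are dual for the pairing
`t(xy)`, and every `A`-linear `φ : B → A` is `t(b·)` for a unique `b`. Multiplication by `x` has
`i`-th diagonal entry the `i`-th coordinate of `x X^i`, which is the `0`-th coordinate of `x`;
hence `Tr(x) = p · t(X^{p-1} x)`. Finally, an `X`-adically continuous ring endomorphism fixing
constants and sending `X ↦ X^p` agrees with `expand p` on polynomials, hence everywhere, so
its range is `R⟦X^p⟧`.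
-/

open PowerSeries

namespace Module.Basis

variable {A B ι : Type*} [CommSemiring A] [Semiring B] [Algebra A B] [Finite ι]

theorem existsUnique_eq_apply_mul (b : Basis ι A B) (t : B →ₗ[A] A) (e : ι ≃ ι)
    (ht : ∀ f j, t (f * b (e j)) = b.repr f j) (φ : B →ₗ[A] A) :
    ∃! c : B, ∀ x, φ x = t (c * x) := by
  refine existsUnique_of_exists_of_unique ?_ fun y₁ y₂ hy₁ hy₂ ↦ b.ext_elem fun j ↦ ?_
  · refine ⟨b.equivFun.symm fun j ↦ φ (b (e j)), fun x ↦ ?_⟩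
    have hφ : φ = t ∘ₗ LinearMap.mulLeft A (b.equivFun.symm fun j ↦ φ (b (e j))) :=
      b.ext fun i ↦ by
        obtain ⟨j, rfl⟩ := e.surjective i
        simp [ht, ← b.equivFun_apply]
    exact LinearMap.congr_fun hφ x
  · rw [← ht, ← ht, ← hy₁, ← hy₂]

end Module.Basis

noncomputable section

namespace PowerSeries

variable {R : Type*} [CommRing R] (p : ℕ)

theorem ringHom_eq_expand_of_map_X (hp : p ≠ 0) (ι : R⟦X⟧ →+* R⟦X⟧)
    (hιX : ι X = X ^ p) (hιC : ∀ a, ι (C a) = C a)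
    (hcont : ∀ m, ∃ N, ∀ g : R⟦X⟧, X ^ N ∣ g → X ^ m ∣ ι g) :
    ι = (expand (R := R) p hp : R⟦X⟧ →+* R⟦X⟧) := by
  have hpoly : ι.comp Polynomial.coeToPowerSeries.ringHom =
      (expand (R := R) p hp : R⟦X⟧ →+* R⟦X⟧).comp Polynomial.coeToPowerSeries.ringHom :=
    Polynomial.ringHom_ext (fun a ↦ by simp [hιC, expand_C]) (by simp [hιX])
  ext g m
  obtain ⟨N, hN⟩ := hcont (m + 1)
  set K := max N (m + 1)
  have htail : X ^ K ∣ g - (trunc K g : R⟦X⟧) :=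
    X_pow_dvd_iff.2 fun k hk ↦ by simp [coeff_trunc, hk]
  have hι : X ^ (m + 1) ∣ ι (g - (trunc K g : R⟦X⟧)) :=
    hN _ ((pow_dvd_pow X (le_max_left _ _)).trans htail)
  have hexpand : X ^ (m + 1) ∣ expand p hp (g - (trunc K g : R⟦X⟧)) := by
    obtain ⟨h, hh⟩ := htail
    rw [hh, map_mul, map_pow, expand_X, ← pow_mul]
    exact (pow_dvd_pow X <| (le_max_right _ _).trans <|
      Nat.le_mul_of_pos_left K (Nat.pos_of_ne_zero hp)).mul_right _
  have htrunc : ι (trunc K g) = expand p hp (trunc K g) := DFunLike.congr_fun hpoly _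
  have hdiff : X ^ (m + 1) ∣ ι g - expand p hp g := by
    simpa [htrunc] using dvd_sub hι hexpand
  simpa [sub_eq_zero] using X_pow_dvd_iff.1 hdiff m (by omega)

variable (R) in
def expandSubring (hp : p ≠ 0) : Subring R⟦X⟧ := (expand (R := R) p hp : R⟦X⟧ →+* R⟦X⟧).range

theorem mem_expandSubring_iff (hp : p ≠ 0) {f : R⟦X⟧} :
    f ∈ expandSubring R p hp ↔ ∀ m, ¬ p ∣ m → coeff m f = 0 := by
  refine ⟨?_, fun hf ↦ ⟨mk fun k ↦ coeff (p * k) f, ?_⟩⟩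
  · rintro ⟨g, rfl⟩ m hm
    exact coeff_expand_of_not_dvd p hp g hm
  · ext m
    by_cases hm : p ∣ m
    · obtain ⟨k, rfl⟩ := hm
      simp
    · simp [coeff_expand_of_not_dvd p hp _ hm, hf m hm]

/-- The series `∑ₖ a_{pk+i} X^{pk}` for `f = ∑ₙ aₙ Xⁿ`, so that
`f = ∑_{i<p} residuePart p i f * X^i`. -/
def residuePart (i : ℕ) : R⟦X⟧ →ₗ[R] R⟦X⟧ where
  toFun f := mk fun m ↦ if p ∣ m then coeff (m + i) f else 0
  map_add' f g := by ext m; simp only [coeff_mk, map_add]; split_ifs <;> simp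
  map_smul' a f := by ext m; simp only [coeff_mk, map_smul]; split_ifs <;> simp

variable {p}

@[simp]
theorem coeff_residuePart (i m : ℕ) (f : R⟦X⟧) :
    coeff m (residuePart p i f) = if p ∣ m then coeff (m + i) f else 0 := by
  simp [residuePart]

theorem residuePart_mem (hp : p ≠ 0) (i : ℕ) (f : R⟦X⟧) :
    residuePart p i f ∈ expandSubring R p hp :=
  (mem_expandSubring_iff p hp).2 fun m hm ↦ by simp [hm]

theorem residuePart_mul_X_pow {i k : ℕ} (hki : k ≤ i) (f : R⟦X⟧) :
    residuePart p i (f * X ^ k) = residuePart p (i - k) f := by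
  ext m
  simp [coeff_mul_X_pow', show k ≤ m + i by omega, Nat.add_sub_assoc hki]

theorem sum_residuePart_mul_X_pow (hp : p ≠ 0) (f : R⟦X⟧) :
    ∑ i ∈ Finset.range p, residuePart p i f * X ^ i = f := by
  ext m
  have hmod : m % p < p := Nat.mod_lt m (by omega)
  have hdvd : p ∣ m - m % p := Nat.dvd_sub_mod m
  rw [map_sum, Finset.sum_eq_single_of_mem (m % p) (Finset.mem_range.2 hmod)]
  · simp [coeff_mul_X_pow', Nat.mod_le, hdvd]
  · intro i hi hne
    rw [coeff_mul_X_pow']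
    split_ifs with him
    · rw [coeff_residuePart, if_neg]
      intro h
      exact hne ((Nat.mod_eq_of_lt (Finset.mem_range.1 hi)).symm.trans
        ((Nat.modEq_iff_dvd' him).2 h))
    · rfl

theorem residuePart_mul_X_pow_of_mem {hp : p ≠ 0} {a : R⟦X⟧} (ha : a ∈ expandSubring R p hp)
    {i j : ℕ} (hi : i < p) (hj : j < p) :
    residuePart p j (a * X ^ i) = if i = j then a else 0 := by
  rw [mem_expandSubring_iff] at ha
  ext m
  by_cases hm : p ∣ m
  · rw [coeff_residuePart, if_pos hm, coeff_mul_X_pow']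
    by_cases hij : i = j
    · subst hij
      simp
    · rw [if_neg hij, map_zero]
      split_ifs with hle
      · refine ha _ fun ⟨l, hl⟩ ↦ hij ?_
        obtain ⟨k, rfl⟩ := hm
        have := congrArg (· % p) (show p * k + j = p * l + i by omega)
        simpa [Nat.mul_add_mod, Nat.mod_eq_of_lt, hi, hj] using this.symm
      · rfl
  · rw [coeff_residuePart, if_neg hm]
    split_ifs <;> simp [ha m hm]

variable (hp : p ≠ 0)

theorem residuePart_mul_of_mem {a : R⟦X⟧} (ha : a ∈ expandSubring R p hp) {i : ℕ} (hi : i < p)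
    (f : R⟦X⟧) : residuePart p i (a * f) = a * residuePart p i f := by
  conv_lhs => rw [← sum_residuePart_mul_X_pow hp f, Finset.mul_sum]
  simp_rw [← mul_assoc]
  rw [map_sum, Finset.sum_eq_single_of_mem i (Finset.mem_range.2 hi)]
  · simp [residuePart_mul_X_pow_of_mem (mul_mem ha (residuePart_mem hp i f)) hi hi]
  · intro k hk hki
    rw [residuePart_mul_X_pow_of_mem (mul_mem ha (residuePart_mem hp k f))
      (Finset.mem_range.1 hk) hi, if_neg hki]

variable (R) in
def residuePartEquiv : R⟦X⟧ ≃ₗ[expandSubring R p hp] (Fin p → expandSubring R p hp) where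
  toFun f i := ⟨residuePart p i f, residuePart_mem hp i f⟩
  invFun g := ∑ i, (g i : R⟦X⟧) * X ^ (i : ℕ)
  map_add' f g := by ext; simp
  map_smul' a f := funext fun i ↦ Subtype.ext (residuePart_mul_of_mem hp a.2 i.2 f)
  left_inv f := by
    simpa [Fin.sum_univ_eq_sum_range (fun i ↦ residuePart p i f * X ^ i)]
      using sum_residuePart_mul_X_pow hp f
  right_inv g := by
    ext j
    simp [residuePart_mul_X_pow_of_mem (g _).2 (Fin.is_lt _) j.2, Fin.val_inj]

variable (R) in
def basisXPow : Module.Basis (Fin p) (expandSubring R p hp) R⟦X⟧ :=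
  .ofEquivFun (residuePartEquiv R hp)

@[simp]
theorem basisXPow_apply (i : Fin p) : basisXPow R hp i = (X : R⟦X⟧) ^ (i : ℕ) := by
  classical
  simp [basisXPow, residuePartEquiv, Pi.single_apply, apply_ite Subtype.val]

@[simp]
theorem coe_basisXPow_repr (f : R⟦X⟧) (i : Fin p) :
    ((basisXPow R hp).repr f i : R⟦X⟧) = residuePart p i f :=
  rfl

variable (R) in
def traceDual : R⟦X⟧ →ₗ[expandSubring R p hp] expandSubring R p hp :=
  (basisXPow R hp).coord ⟨p - 1, by omega⟩

theorem coe_traceDual (f : R⟦X⟧) : (traceDual R hp f : R⟦X⟧) = residuePart p (p - 1) f :=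
  rfl

theorem traceDual_mul_basisXPow_rev (f : R⟦X⟧) (j : Fin p) :
    traceDual R hp (f * basisXPow R hp j.rev) = (basisXPow R hp).repr f j := by
  ext1
  rw [coe_traceDual, coe_basisXPow_repr, basisXPow_apply, Fin.val_rev,
    residuePart_mul_X_pow (by omega)]
  congr 2
  omega

theorem coe_trace (x : R⟦X⟧) :
    (Algebra.trace (expandSubring R p hp) R⟦X⟧ x : R⟦X⟧) = p * residuePart p 0 x := by
  classical
  rw [Algebra.trace_eq_matrix_trace (basisXPow R hp), Matrix.trace]
  simp [Algebra.leftMulMatrix_eq_repr_mul, residuePart_mul_X_pow]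

theorem natCast_mul_traceDual_X_pow_mul (x : R⟦X⟧) :
    (p : expandSubring R p hp) * traceDual R hp (X ^ (p - 1) * x) =
      Algebra.trace (expandSubring R p hp) R⟦X⟧ x := by
  ext1
  rw [coe_trace, Subring.coe_mul, coe_traceDual, mul_comm (X ^ _), residuePart_mul_X_pow le_rfl,
    Nat.sub_self]
  rfl

theorem existsUnique_eq_traceDual_mul (φ : R⟦X⟧ →ₗ[expandSubring R p hp] expandSubring R p hp) :
    ∃! b : R⟦X⟧, ∀ x, φ x = traceDual R hp (b * x) :=
  (basisXPow R hp).existsUnique_eq_apply_mul _ Fin.revPerm (traceDual_mul_basisXPow_rev hp) φ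

end PowerSeries

end

theorem inverse_different_cusp_general
    (p : ℕ) [Fact p.Prime]
    (O : Type) [CommRing O]
    (ι : PowerSeries O →+* PowerSeries O)
    (hιX : ι PowerSeries.X = PowerSeries.X ^ p)
    (hιC : ∀ a : O, ι (PowerSeries.C a) = PowerSeries.C a)
    (hcont : ∀ m : ℕ, ∃ N : ℕ, ∀ g : PowerSeries O,
      PowerSeries.X ^ N ∣ g → PowerSeries.X ^ m ∣ ι g) :
    -- A = O[[q^{1/p^{n-1}}]] inside B = O[[q^{1/p^n}]]
    ∀ A : Subring (PowerSeries O), A = ι.range →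
      -- Hom_A(B, A) is free of rank one over B, generated by
      -- t = (1/p)·q^{1/p^n − 1/p^{n-1}}·Tr_{B/A}, i.e. p·(X^{p-1} • t) = Tr_{B/A}
      ∃ t : PowerSeries O →ₗ[A] A,
        (∀ x : PowerSeries O,
          (p : A) * t (PowerSeries.X ^ (p - 1) * x) =
            Algebra.trace A (PowerSeries O) x) ∧
        (∀ φ : PowerSeries O →ₗ[A] A,
          ∃! b : PowerSeries O, ∀ x, φ x = t (b * x)) := by
  intro A hA
  have hp : p ≠ 0 := (Fact.out : p.Prime).ne_zero
  obtain rfl : A = expandSubring O p hp := by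
    rw [hA, ringHom_eq_expand_of_map_X p hp ι hιX hιC hcont]
    rfl
  exact ⟨traceDual O hp, natCast_mul_traceDual_X_pow_mul hp, existsUnique_eq_traceDual_mul hp⟩

theorem inverse_different_cusp
    (p : ℕ) [Fact p.Prime] (n : ℕ) (hn : 1 ≤ n)
    (O : Type) [CommRing O] [IsDomain O] [IsLocalRing O] [CharZero O]
    [IsAdicComplete (IsLocalRing.maximalIdeal O) O]
    [IsDiscreteValuationRing O]
    -- residue characteristic p
    (hres : (p : O) ∈ IsLocalRing.maximalIdeal O)
    -- O contains a primitive p^n-th root of unity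
    (ζ : O) (hζ : IsPrimitiveRoot ζ (p ^ n))
    (ι : PowerSeries O →+* PowerSeries O)
    (hιX : ι PowerSeries.X = PowerSeries.X ^ p)
    (hιC : ∀ a : O, ι (PowerSeries.C a) = PowerSeries.C a)
    (hcont : ∀ m : ℕ, ∃ N : ℕ, ∀ g : PowerSeries O,
      PowerSeries.X ^ N ∣ g → PowerSeries.X ^ m ∣ ι g) :
    -- A = O[[q^{1/p^{n-1}}]] inside B = O[[q^{1/p^n}]]
    ∀ A : Subring (PowerSeries O), A = ι.range →
      -- Hom_A(B, A) is free of rank one over B, generated by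
      -- t = (1/p)·q^{1/p^n − 1/p^{n-1}}·Tr_{B/A}, i.e. p·(X^{p-1} • t) = Tr_{B/A}
      ∃ t : PowerSeries O →ₗ[A] A,
        (∀ x : PowerSeries O,
          (p : A) * t (PowerSeries.X ^ (p - 1) * x) =
            Algebra.trace A (PowerSeries O) x) ∧
        (∀ φ : PowerSeries O →ₗ[A] A,
          ∃! b : PowerSeries O, ∀ x, φ x = t (b * x)) :=
  inverse_different_cusp_general p O ι hιX hιC hcont
end
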